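/- arXiv:1305.4416 — 7 statements merged into one kernel-verified Lean document; each statement's English description precedes it below -/
import Mathlib

section
/- Let r, d be coprime positive integers and suppose there exist distinct indices j_1, ..., j_{2k} (all distinct, each less than N) such that the product of (r + j_{2i}*d) over i = 1..k equals the product of (r + j_{2i-1}*d) over i = 1..k. If 2k ≤ n and n ≤ N, then r ≤ N^k and d ≤ N^k. -/
/-!
Expanding both products in elementary symmetric functions of `aᵢ = j (2i)` and `bᵢ = j (2i+1)`
gives a vanishing binary form `∑ₘ cₘ r^(k-m) d^m = 0` with `cₘ = eₘ(a) - eₘ(b)`. Its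
coefficients are not all zero, since otherwise `∏ (X + aᵢ) = ∏ (X + bᵢ)`, which fails at
`X = -a₀`; and `|cₘ| ≤ (k choose m) N^m ≤ N^k` as `k ≤ N`. Modulo `d` only the lowest
nonzero term of the form survives, and modulo `r` only the highest, so by coprimality `d` and
`r` each divide a nonzero coefficient.
-/

open Finset Polynomial

theorem Finset.prod_add_mul_eq_sum_powersetCard {ι R : Type*} [CommSemiring R]
    (s : Finset ι) (f : ι → R) (x y : R) :
    ∏ i ∈ s, (x + f i * y) =
      ∑ m ∈ range (#s + 1), (∑ t ∈ s.powersetCard m, ∏ i ∈ t, f i) * x ^ (#s - m) * y ^ m := by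
  have h := congrArg (eval x) (Multiset.prod_X_add_C_eq_sum_esymm (s.val.map fun i => f i * y))
  simp only [Multiset.map_map, Function.comp_def, eval_multiset_prod, eval_add, eval_X, eval_C,
    Multiset.card_map, eval_finsetSum, eval_mul, eval_pow, Finset.esymm_map_val, card_val] at h
  rw [Finset.prod_eq_multiset_prod, h]
  refine sum_congr rfl fun m _ => ?_
  rw [sum_mul, sum_mul, sum_mul]
  refine sum_congr rfl fun t ht => ?_
  rw [prod_mul_distrib, prod_const, (mem_powersetCard.1 ht).2]
  ring

theorem Nat.choose_mul_pow_le_pow {k N : ℕ} (hk : k ≤ N) (m : ℕ) :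
    k.choose m * N ^ m ≤ N ^ k := by
  rcases le_or_gt m k with hm | hm
  · calc k.choose m * N ^ m = k.choose (k - m) * N ^ m := by rw [Nat.choose_symm hm]
      _ ≤ N ^ (k - m) * N ^ m := by
          gcongr; exact (Nat.choose_le_pow k (k - m)).trans (Nat.pow_le_pow_left hk _)
      _ = N ^ k := by rw [← pow_add, Nat.sub_add_cancel hm]
  · simp [Nat.choose_eq_zero_of_lt hm]

theorem Finset.sum_powersetCard_prod_le_pow {ι : Type*} (s : Finset ι) (f : ι → ℕ) {N : ℕ}
    (hf : ∀ i ∈ s, f i ≤ N) (hs : #s ≤ N) (m : ℕ) :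
    ∑ t ∈ s.powersetCard m, ∏ i ∈ t, f i ≤ N ^ #s := by
  calc ∑ t ∈ s.powersetCard m, ∏ i ∈ t, f i ≤ ∑ _t ∈ s.powersetCard m, N ^ m := by
        refine sum_le_sum fun t ht => ?_
        obtain ⟨hts, rfl⟩ := mem_powersetCard.1 ht
        exact prod_le_pow_card _ _ _ fun i hi => hf i (hts hi)
    _ = (#s).choose m * N ^ m := by rw [sum_const, card_powersetCard, smul_eq_mul]
    _ ≤ N ^ #s := Nat.choose_mul_pow_le_pow hs m

section
variable {R : Type*} [CommRing R] [IsDomain R]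

theorem Finset.exists_sum_powersetCard_prod_ne {ι : Type*}
    {s : Finset ι} {f g : ι → R} {i₀ : ι} (hi₀ : i₀ ∈ s) (hg : ∀ i ∈ s, g i ≠ f i₀) :
    ∃ m ≤ #s, ∑ t ∈ s.powersetCard m, ∏ i ∈ t, f i ≠ ∑ t ∈ s.powersetCard m, ∏ i ∈ t, g i := by
  by_contra! h
  have hprod : ∏ i ∈ s, (-f i₀ + f i * 1) = ∏ i ∈ s, (-f i₀ + g i * 1) := by
    rw [prod_add_mul_eq_sum_powersetCard, prod_add_mul_eq_sum_powersetCard]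
    exact sum_congr rfl fun m hm => by rw [h m (Nat.lt_succ_iff.1 (mem_range.1 hm))]
  have hf : ∏ i ∈ s, (-f i₀ + f i * 1) = 0 := prod_eq_zero hi₀ (by ring)
  refine prod_ne_zero_iff.2 (fun i hi => ?_) (hprod ▸ hf)
  rw [mul_one, ne_eq, neg_add_eq_zero]
  exact (hg i hi).symm

theorem dvd_of_sum_eq_zero_of_forall_lt {c : ℕ → R} {x y : R} {k m₀ : ℕ}
    (hsum : ∑ m ∈ range (k + 1), c m * x ^ (k - m) * y ^ m = 0)
    (hxy : IsCoprime x y) (hy : y ≠ 0) (hm₀ : m₀ ≤ k) (hlow : ∀ m < m₀, c m = 0) :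
    y ∣ c m₀ := by
  -- every term other than the `m₀`-th is divisible by `y ^ (m₀ + 1)`
  have hrest : y ^ m₀ * y ∣ ∑ m ∈ (range (k + 1)).erase m₀, c m * x ^ (k - m) * y ^ m := by
    refine dvd_sum fun m hm => ?_
    rcases lt_or_gt_of_ne (ne_of_mem_erase hm) with hlt | hgt
    · simp [hlow m hlt]
    · exact (pow_succ y m₀ ▸ pow_dvd_pow y hgt).mul_left _
  rw [← add_sum_erase _ _ (mem_range.2 (Nat.lt_succ_of_le hm₀)), add_eq_zero_iff_eq_neg] at hsum
  have hlead : y ^ m₀ * y ∣ c m₀ * x ^ (k - m₀) * y ^ m₀ := hsum ▸ (dvd_neg.2 hrest)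
  rw [mul_comm (y ^ m₀), mul_dvd_mul_iff_right (pow_ne_zero _ hy)] at hlead
  exact (hxy.symm.pow_right).dvd_of_dvd_mul_right hlead

theorem dvd_of_sum_eq_zero_of_forall_gt {c : ℕ → R} {x y : R} {k m₁ : ℕ}
    (hsum : ∑ m ∈ range (k + 1), c m * x ^ (k - m) * y ^ m = 0)
    (hxy : IsCoprime x y) (hx : x ≠ 0) (hm₁ : m₁ ≤ k)
    (hhigh : ∀ m, m₁ < m → m ≤ k → c m = 0) :
    x ∣ c m₁ := by
  have hsum' : ∑ m ∈ range (k + 1), c (k - m) * y ^ (k - m) * x ^ m = 0 := by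
    rw [← sum_range_reflect, ← hsum]
    refine sum_congr rfl fun m hm => ?_
    have hmk : m ≤ k := Nat.lt_succ_iff.1 (mem_range.1 hm)
    rw [Nat.add_sub_cancel, Nat.sub_sub_self hmk, mul_right_comm]
  have h := dvd_of_sum_eq_zero_of_forall_lt hsum' hxy.symm hx (Nat.sub_le k m₁)
    fun m hm => hhigh (k - m) (by omega) (Nat.sub_le k m)
  rwa [Nat.sub_sub_self hm₁] at h

theorem exists_dvd_coeff_of_sum_eq_zero {c : ℕ → R} {x y : R} {k : ℕ}
    (hsum : ∑ m ∈ range (k + 1), c m * x ^ (k - m) * y ^ m = 0)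
    (hxy : IsCoprime x y) (hx : x ≠ 0) (hy : y ≠ 0) (hc : ∃ m ≤ k, c m ≠ 0) :
    (∃ m ≤ k, c m ≠ 0 ∧ x ∣ c m) ∧ (∃ m ≤ k, c m ≠ 0 ∧ y ∣ c m) := by
  classical
  constructor
  · obtain ⟨m, hmk, hcm⟩ := hc
    set m₁ := Nat.findGreatest (c · ≠ 0) k
    refine ⟨m₁, Nat.findGreatest_le k, Nat.findGreatest_spec (P := (c · ≠ 0)) hmk hcm, ?_⟩
    exact dvd_of_sum_eq_zero_of_forall_gt hsum hxy hx (Nat.findGreatest_le k)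
      fun m hlt hle => not_not.1 (Nat.findGreatest_is_greatest hlt hle)
  · obtain ⟨hm₀k, hm₀⟩ := Nat.find_spec hc
    refine ⟨Nat.find hc, hm₀k, hm₀, dvd_of_sum_eq_zero_of_forall_lt hsum hxy hy hm₀k ?_⟩
    intro m hlt
    by_contra hne
    exact Nat.find_min hc hlt ⟨hlt.le.trans hm₀k, hne⟩

end

theorem le_pow_card_of_prod_add_mul_eq {ι : Type*} {s : Finset ι} {a b : ι → ℕ} {r d N : ℕ}
    (hr : 0 < r) (hd : 0 < d) (hrd : Nat.Coprime r d)
    (ha : ∀ i ∈ s, a i ≤ N) (hb : ∀ i ∈ s, b i ≤ N) (hs : #s ≤ N)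
    (hab : ∃ i₀ ∈ s, ∀ i ∈ s, b i ≠ a i₀)
    (hprod : ∏ i ∈ s, (r + a i * d) = ∏ i ∈ s, (r + b i * d)) :
    r ≤ N ^ #s ∧ d ≤ N ^ #s := by
  set e : (ι → ℕ) → ℕ → ℕ := fun f m => ∑ t ∈ s.powersetCard m, ∏ i ∈ t, f i
  set c : ℕ → ℤ := fun m => (e a m : ℤ) - e b m
  have hsum : ∑ m ∈ range (#s + 1), c m * (r : ℤ) ^ (#s - m) * (d : ℤ) ^ m = 0 := by
    have h := congrArg (Nat.cast : ℕ → ℤ) hprod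
    rw [prod_add_mul_eq_sum_powersetCard, prod_add_mul_eq_sum_powersetCard] at h
    simp only [c, sub_mul, sum_sub_distrib]
    exact_mod_cast sub_eq_zero.2 h
  have hc : ∃ m ≤ #s, c m ≠ 0 := by
    obtain ⟨i₀, hi₀, hne⟩ := hab
    obtain ⟨m, hm, hne⟩ := exists_sum_powersetCard_prod_ne (f := fun i => (a i : ℤ))
      (g := fun i => (b i : ℤ)) hi₀ fun i hi => by exact_mod_cast hne i hi
    refine ⟨m, hm, sub_ne_zero.2 ?_⟩
    push_cast [e]
    exact hne
  have hbound : ∀ m, (c m).natAbs ≤ N ^ #s := fun m => by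
    have := sum_powersetCard_prod_le_pow s a ha hs m
    have := sum_powersetCard_prod_le_pow s b hb hs m
    simp only [c, e]
    omega
  obtain ⟨⟨m₁, -, hc₁, hr₁⟩, ⟨m₀, -, hc₀, hd₀⟩⟩ := exists_dvd_coeff_of_sum_eq_zero hsum
    (Nat.isCoprime_iff_coprime.2 hrd) (by exact_mod_cast hr.ne') (by exact_mod_cast hd.ne') hc
  exact ⟨(Int.natAbs_le_of_dvd_ne_zero hr₁ hc₁).trans (hbound m₁),
    (Int.natAbs_le_of_dvd_ne_zero hd₀ hc₀).trans (hbound m₀)⟩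

theorem stmt_1_general (r d N n k : ℕ) (hr : 0 < r) (hd : 0 < d)
    (hk : 0 < k) (hcop : Nat.Coprime r d)
    (j : ℕ → ℕ)
    (hinj : ∀ a < 2 * k, ∀ b < 2 * k, j a = j b → a = b)
    (hlt : ∀ i < 2 * k, j i < N)
    (hprod : ∏ i ∈ Finset.range k, (r + j (2 * i) * d)
           = ∏ i ∈ Finset.range k, (r + j (2 * i + 1) * d))
    (hkn : 2 * k ≤ n) (hnN : n ≤ N) :
    r ≤ N ^ k ∧ d ≤ N ^ k := by
  have hbound := le_pow_card_of_prod_add_mul_eq hr hd hcop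
    (fun i hi => (hlt (2 * i) (by have := mem_range.1 hi; omega)).le)
    (fun i hi => (hlt (2 * i + 1) (by have := mem_range.1 hi; omega)).le)
    (by rw [card_range]; omega)
    ⟨0, mem_range.2 hk, fun i hi h => by
      have := hinj (2 * i + 1) (by have := mem_range.1 hi; omega) 0 (by omega) h
      omega⟩
    hprod
  rwa [card_range] at hbound

theorem stmt_1 (r d N n k : ℕ) (hr : 0 < r) (hd : 0 < d) (hN : 0 < N) (hn : 0 < n)
    (hk : 0 < k) (hcop : Nat.Coprime r d)
    (j : ℕ → ℕ)
    (hinj : ∀ a < 2 * k, ∀ b < 2 * k, j a = j b → a = b)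
    (hlt : ∀ i < 2 * k, j i < N)
    (hprod : ∏ i ∈ Finset.range k, (r + j (2 * i) * d)
           = ∏ i ∈ Finset.range k, (r + j (2 * i + 1) * d))
    (hkn : 2 * k ≤ n) (hnN : n ≤ N) :
    r ≤ N ^ k ∧ d ≤ N ^ k :=
  stmt_1_general r d N n k hr hd hk hcop j hinj hlt hprod hkn hnN
end

section
/- For every sufficiently large n, there exists a set B of at most 2n natural numbers such that the product set B.B = {b*b' : b, b' ∈ B} contains every natural number in the interval [1, ⌊n * log n⌋]. In particular, B.B contains an arithmetic progression of length Ω(|B| * log |B|). -/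
/-!
Let `K = n / 2`, `M = ⌊n log n⌋` and `B = {1, …, K} ∪ {primes in (K, M]}`. Writing `m ≤ M` as
`a * b` with `a` its largest divisor `≤ K`, the cofactor `b` is either `≤ K`, a prime, or
composite with smallest prime factor `q`; in the last case `a q > K` and `q² ≤ b` force
`m² > K³`, which is impossible since `M ≲ n log n` is far below `K^{3/2}`. Chebyshev's bound
`∏_{p ≤ M} p ≤ 4^M` gives at most `M log 4 / log K ≈ 1.39 n` primes in `(K, M]`, so `|B| ≤ 2n`.
-/

open scoped Pointwise
open Finset Filter Real

def smallAndPrimes (K M : ℕ) : Finset ℕ := Icc 1 K ∪ {p ∈ Ioc K M | p.Prime}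

theorem card_smallAndPrimes_le (K M : ℕ) :
    #(smallAndPrimes K M) ≤ K + #{p ∈ Ioc K M | p.Prime} := by
  simpa only [smallAndPrimes, Nat.card_Icc, add_tsub_cancel_right] using card_union_le (Icc 1 K) {p ∈ Ioc K M | p.Prime}

theorem Icc_one_subset_smallAndPrimes_mul_self {K M : ℕ} (hMK : M ^ 2 ≤ K ^ 3) :
    Icc 1 M ⊆ smallAndPrimes K M * smallAndPrimes K M := by
  intro m hm
  obtain ⟨hm1, hmM⟩ := mem_Icc.1 hm
  have hK : 1 ≤ K := by
    by_contra! hK0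
    have hM : M = 0 := by simpa [Nat.lt_one_iff.1 hK0] using hMK
    omega
  set a := Nat.findGreatest (· ∣ m) K
  have ha_le : a ≤ K := Nat.findGreatest_le K
  have ha_pos : 1 ≤ a := Nat.le_findGreatest hK (one_dvd m)
  have ha_max : ∀ d ≤ K, d ∣ m → d ≤ a := fun d hd hdm => Nat.le_findGreatest hd hdm
  have ha_dvd : a ∣ m := Nat.findGreatest_spec (P := (· ∣ m)) hK (one_dvd m)
  clear_value a
  obtain ⟨b, rfl⟩ := ha_dvd
  have hb_pos : 0 < b := Nat.pos_of_mul_pos_left (by omega : 0 < a * b)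
  have hb_le : b ≤ M := le_trans (Nat.le_mul_of_pos_left b ha_pos) hmM
  refine mul_mem_mul (mem_union_left _ (mem_Icc.2 ⟨ha_pos, ha_le⟩)) ?_
  by_cases hbK : b ≤ K
  · exact mem_union_left _ (mem_Icc.2 ⟨hb_pos, hbK⟩)
  by_cases hb : b.Prime
  · exact mem_union_right _ (mem_filter.2 ⟨mem_Ioc.2 ⟨by omega, hb_le⟩, hb⟩)
  exfalso
  set q := b.minFac
  have hq_sq : q ^ 2 ≤ b := Nat.minFac_sq_le_self hb_pos hb
  have haq : K < a * q := by
    by_contra! h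
    have := ha_max _ h (mul_dvd_mul_left a (Nat.minFac_dvd b))
    nlinarith [(Nat.minFac_prime (by omega : b ≠ 1)).two_le]
  have : K ^ 3 < (a * b) ^ 2 :=
    calc K ^ 3 = K ^ 2 * K := by ring
      _ < (a * q) ^ 2 * b := Nat.mul_lt_mul'' (Nat.pow_lt_pow_left haq two_ne_zero) (by omega)
      _ = a ^ 2 * q ^ 2 * b := by ring
      _ ≤ a ^ 2 * b * b := by gcongr
      _ = (a * b) ^ 2 := by ring
  have : (a * b) ^ 2 ≤ M ^ 2 := Nat.pow_le_pow_left hmM 2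
  omega

theorem pow_card_primes_Ioc_le_four_pow (K M : ℕ) :
    K ^ #{p ∈ Ioc K M | p.Prime} ≤ 4 ^ M :=
  calc K ^ #{p ∈ Ioc K M | p.Prime}
      ≤ ∏ p ∈ Ioc K M with p.Prime, p :=
        pow_card_le_prod _ _ _ fun p hp => (mem_Ioc.1 (mem_filter.1 hp).1).1.le
    _ ≤ primorial M := by
        refine prod_le_prod_of_subset_of_one_le' (fun p hp => ?_) fun p hp _ => ?_
        · simp only [mem_filter, mem_Ioc, mem_range] at hp ⊢
          exact ⟨by omega, hp.2⟩
        · exact (mem_filter.1 hp).2.one_lt.le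
    _ ≤ 4 ^ M := primorial_le_four_pow M

theorem quarter_le_natCast_half {n : ℕ} (hn : 2 ≤ n) : (n : ℝ) / 4 ≤ (n / 2 : ℕ) := by
  have h₁ : (n : ℝ) ≤ 2 * (n / 2 : ℕ) + 1 := by exact_mod_cast (by omega : n ≤ 2 * (n / 2) + 1)
  have h₂ : (1 : ℝ) ≤ (n / 2 : ℕ) := by exact_mod_cast (by omega : 1 ≤ n / 2)
  linarith

theorem floor_mul_log_sq_le_half_cube {n : ℕ} (hn : 2 ≤ n) (hlog : log n ^ 2 ≤ n / 64) :
    ⌊n * log n⌋₊ ^ 2 ≤ (n / 2) ^ 3 := by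
  have hn0 : (0 : ℝ) < n := by positivity
  have hlog0 : 0 ≤ log n := log_natCast_nonneg n
  have hK := quarter_le_natCast_half hn
  have hM := Nat.floor_le (mul_nonneg hn0.le hlog0)
  suffices (⌊n * log n⌋₊ : ℝ) ^ 2 ≤ ((n / 2 : ℕ) : ℝ) ^ 3 by exact_mod_cast this
  calc (⌊n * log n⌋₊ : ℝ) ^ 2 ≤ (n * log n) ^ 2 := by gcongr
    _ = n ^ 2 * log n ^ 2 := by ring
    _ ≤ n ^ 2 * (n / 64) := by gcongr
    _ = (n / 4) ^ 3 := by ring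
    _ ≤ ((n / 2 : ℕ) : ℝ) ^ 3 := by gcongr

theorem two_mul_card_primes_Ioc_floor_le {n : ℕ} (hn : 2 ≤ n) (hlog : 20 ≤ log n) :
    2 * #{p ∈ Ioc (n / 2) ⌊n * log n⌋₊ | p.Prime} ≤ 3 * n := by
  set P := #{p ∈ Ioc (n / 2) ⌊n * log n⌋₊ | p.Prime}
  have hn0 : (0 : ℝ) < n := by positivity
  have hlog4 : log 4 = 2 * log 2 := by
    rw [show (4 : ℝ) = 2 ^ 2 by norm_num, Real.log_pow]; push_cast; ring
  have hlog2 := Real.log_two_lt_d9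
  have hK := quarter_le_natCast_half hn
  have hlogK : log n - log 4 ≤ log (n / 2 : ℕ) := by
    rw [← Real.log_div hn0.ne' (by norm_num)]
    exact Real.log_le_log (by positivity) hK
  have hChebyshev : (P : ℝ) * log (n / 2 : ℕ) ≤ n * log n * log 4 := by
    have h : ((n / 2 : ℕ) : ℝ) ^ P ≤ (4 : ℝ) ^ ⌊n * log n⌋₊ := by
      exact_mod_cast pow_card_primes_Ioc_le_four_pow (n / 2) ⌊n * log n⌋₊
    have hlog_le := Real.log_le_log (pow_pos (lt_of_lt_of_le (by positivity) hK) P) h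
    rw [Real.log_pow, Real.log_pow] at hlog_le
    refine hlog_le.trans (mul_le_mul_of_nonneg_right ?_ (log_nonneg (by norm_num)))
    exact Nat.floor_le (mul_nonneg hn0.le (by linarith))
  have hgap : 0 < log n - log 4 := by linarith
  have hkey : 2 * log n * log 4 ≤ 3 * (log n - log 4) := by
    nlinarith [mul_le_mul_of_nonneg_right hlog (by linarith : (0 : ℝ) ≤ 3 - 4 * log 2)]
  suffices (2 * P : ℝ) ≤ 3 * n by exact_mod_cast this
  refine le_of_mul_le_mul_right ?_ hgap
  calc (2 * P : ℝ) * (log n - log 4) = 2 * (P * (log n - log 4)) := by ring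
    _ ≤ 2 * (P * log (n / 2 : ℕ)) := by gcongr
    _ ≤ n * (2 * log n * log 4) := by linarith
    _ ≤ n * (3 * (log n - log 4)) := by gcongr
    _ = 3 * n * (log n - log 4) := by ring

theorem stmt_3 :
    ∃ n₀ : ℕ, ∀ n ≥ n₀, ∃ B : Finset ℕ,
      B.card ≤ 2 * n ∧
      Finset.Icc 1 ⌊(n : ℝ) * Real.log n⌋₊ ⊆ B * B := by
  have hlog_sq : ∀ᶠ n : ℕ in atTop, log n ^ 2 ≤ n / 64 := by
    filter_upwards [tendsto_natCast_atTop_atTop.eventually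
      ((isLittleO_pow_log_id_atTop (n := 2)).bound (by norm_num : (0 : ℝ) < 1 / 64))] with n hn
    simpa [div_eq_inv_mul] using hn
  have hlog_ge : ∀ᶠ n : ℕ in atTop, 20 ≤ log n :=
    tendsto_natCast_atTop_atTop.eventually (tendsto_log_atTop.eventually_ge_atTop 20)
  obtain ⟨n₀, h⟩ := eventually_atTop.1
    ((hlog_sq.and hlog_ge).and (eventually_ge_atTop 2))
  refine ⟨n₀, fun n hn => ⟨smallAndPrimes (n / 2) ⌊n * log n⌋₊, ?_, ?_⟩⟩
  · obtain ⟨⟨-, hlog⟩, h2⟩ := h n hn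
    have := card_smallAndPrimes_le (n / 2) ⌊n * log n⌋₊
    have := two_mul_card_primes_Ioc_floor_le h2 hlog
    omega
  · obtain ⟨⟨hlog, -⟩, h2⟩ := h n hn
    exact Icc_one_subset_smallAndPrimes_mul_self (floor_mul_log_sq_le_half_cube h2 hlog)
end

section
/- Let x be a natural number with n ≤ x ≤ n * log n, where n is sufficiently large. If every prime factor of x is at most log n, then x can be written as a product x = d_1 * d_2 with d_1 ≤ n and d_2 ≤ n. -/
/-!
Take for `d₁` the largest divisor of `x` not exceeding `n`, and `x = d₁ * d₂`. If `d₂ > 1`, any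
prime `p ∣ d₂` has `d₁ * p ∣ x`, so maximality forces `n < d₁ * p ≤ d₁ * log n`. Hence
`n * d₂ < x * log n ≤ n * (log n) ^ 2`, i.e. `d₂ < (log n) ^ 2`, and `(log n) ^ 2 ≤ n` for large `n`.
-/

open Filter

theorem Nat.exists_dvd_le_forall_prime_mul_dvd_lt {n : ℕ} (hn : 0 < n) (x : ℕ) :
    ∃ d, d ∣ x ∧ d ≤ n ∧ ∀ p, p.Prime → d * p ∣ x → n < d * p := by
  let P : ℕ → Prop := (· ∣ x)
  refine ⟨Nat.findGreatest P n, Nat.findGreatest_spec (P := P) hn (one_dvd x),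
    Nat.findGreatest_le n, fun p hp hdvd => ?_⟩
  have hd_pos : 0 < Nat.findGreatest P n := Nat.le_findGreatest hn (one_dvd x)
  by_contra! hle
  have := Nat.le_findGreatest (P := P) hle hdvd
  nlinarith [hp.two_le]

theorem cast_lt_sq_of_lt_mul_of_mul_le {n d₁ d₂ : ℕ} {B : ℝ} (hd₁ : (n : ℝ) < d₁ * B)
    (hx : ((d₁ * d₂ : ℕ) : ℝ) ≤ n * B) : (d₂ : ℝ) < B ^ 2 := by
  have hB : 0 < B := by
    by_contra! hB
    nlinarith [(Nat.cast_nonneg d₁ : (0 : ℝ) ≤ d₁), (Nat.cast_nonneg n : (0 : ℝ) ≤ n)]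
  push_cast at hx
  rcases Nat.eq_zero_or_pos d₂ with rfl | hd₂
  · simpa using pow_pos hB 2
  have : (n : ℝ) * d₂ < n * B ^ 2 :=
    calc (n : ℝ) * d₂ < d₁ * B * d₂ := by gcongr
      _ = d₁ * d₂ * B := by ring
      _ ≤ n * B * B := by gcongr
      _ = n * B ^ 2 := by ring
  exact lt_of_mul_lt_mul_left this (Nat.cast_nonneg n)

theorem exists_mul_eq_le_le_of_prime_le {n x : ℕ} {B : ℝ} (hn : 0 < n) (hB : B ^ 2 ≤ n)
    (hx : (x : ℝ) ≤ n * B) (hprime : ∀ p : ℕ, p.Prime → p ∣ x → (p : ℝ) ≤ B) :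
    ∃ d₁ d₂ : ℕ, x = d₁ * d₂ ∧ d₁ ≤ n ∧ d₂ ≤ n := by
  obtain ⟨d₁, ⟨d₂, rfl⟩, hd₁, hmax⟩ := Nat.exists_dvd_le_forall_prime_mul_dvd_lt hn x
  refine ⟨d₁, d₂, rfl, hd₁, ?_⟩
  rcases eq_or_ne d₂ 1 with rfl | hd₂
  · exact hn
  obtain ⟨p, hp, hpd₂⟩ := Nat.exists_prime_and_dvd hd₂
  have hlt : (n : ℝ) < d₁ * B :=
    calc (n : ℝ) < (d₁ * p : ℕ) := by exact_mod_cast hmax p hp (mul_dvd_mul_left d₁ hpd₂)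
      _ ≤ d₁ * B := by
        push_cast
        gcongr
        exact hprime p hp (dvd_mul_of_dvd_right hpd₂ d₁)
  exact_mod_cast (cast_lt_sq_of_lt_mul_of_mul_le hlt hx).le.trans hB

theorem eventually_log_sq_le : ∀ᶠ n : ℕ in atTop, Real.log n ^ 2 ≤ n := by
  filter_upwards [tendsto_natCast_atTop_atTop.eventually
    ((Real.isLittleO_pow_log_id_atTop (n := 2)).bound one_pos)] with n hn
  simpa [abs_of_nonneg (sq_nonneg (Real.log n))] using hn

theorem stmt_4 :
    ∃ n₀ : ℕ, ∀ n ≥ n₀, ∀ x : ℕ,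
      n ≤ x → (x : ℝ) ≤ (n : ℝ) * Real.log n →
      (∀ p : ℕ, p.Prime → p ∣ x → (p : ℝ) ≤ Real.log n) →
      ∃ d₁ d₂ : ℕ, x = d₁ * d₂ ∧ d₁ ≤ n ∧ d₂ ≤ n := by
  obtain ⟨n₀, hn₀⟩ := eventually_atTop.mp (eventually_log_sq_le.and (eventually_gt_atTop 0))
  refine ⟨n₀, fun n hn x _ hx hprime => ?_⟩
  obtain ⟨hlog, hpos⟩ := hn₀ n hn
  exact exists_mul_eq_le_le_of_prime_le hpos hlog hx hprime
end

section
/- Suppose b_1, b_2, b_3, b_4 are nonzero complex numbers such that the four products b_1*b_2, b_2*b_3, b_3*b_4, b_4*b_1 are four distinct elements of the set A = {r + i : i ∈ ℤ, 0 ≤ i ≤ N} for some complex number r. Then r is rational. -/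
/-! Multiplying the products around the 4-cycle gives
`(b₁b₂)(b₃b₄) = (b₂b₃)(b₄b₁)`, i.e. `(r + i)(r + k) = (r + j)(r + l)` for integers `i, j, k, l`.
This is linear in `r`: `r (i + k - j - l) = jl - ik`. If `i + k ≠ j + l`, then `r` is a quotient
of integers. Otherwise also `ik = jl`, so `{i, k} = {j, l}` and `b₁b₂` coincides with `b₂b₃`
or `b₄b₁`. -/

theorem eq_or_eq_of_add_eq_add_of_mul_eq_mul {R : Type*} [CommRing R] [NoZeroDivisors R]
    {a b c d : R} (hsum : a + c = b + d) (hprod : a * c = b * d) : a = b ∨ a = d := by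
  have h : (a - b) * (a - d) = 0 := by linear_combination a * hsum - hprod
  simpa only [mul_eq_zero, sub_eq_zero] using h

theorem exists_rat_eq_of_add_int_mul_add_int_eq {K : Type*} [Field K] [CharZero K] {r : K}
    {i j k l : ℤ} (hij : i ≠ j) (hil : i ≠ l)
    (h : (r + i) * (r + k) = (r + j) * (r + l)) : ∃ q : ℚ, r = q := by
  have hlin : r * (i + k - j - l) = j * l - i * k := by linear_combination h
  by_cases hsum : (i + k : K) = j + l
  · have hprod : (i * k : K) = j * l := by
      linear_combination hlin - r * hsum
    rcases eq_or_eq_of_add_eq_add_of_mul_eq_mul hsum hprod with hj | hl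
    exacts [absurd (Int.cast_injective hj) hij, absurd (Int.cast_injective hl) hil]
  · have hden : (i + k - j - l : K) ≠ 0 := fun h0 => hsum (by linear_combination h0)
    refine ⟨(j * l - i * k) / (i + k - j - l), ?_⟩
    push_cast
    rw [eq_div_iff hden, hlin]

theorem stmt_6_general (r : ℂ) (N : ℕ)
    (A : Set ℂ) (hA : A = {z : ℂ | ∃ i : ℤ, 0 ≤ i ∧ i ≤ (N : ℤ) ∧ z = r + (i : ℂ)})
    (b₁ b₂ b₃ b₄ : ℂ)
    (m1 : b₁ * b₂ ∈ A) (m2 : b₂ * b₃ ∈ A) (m3 : b₃ * b₄ ∈ A) (m4 : b₄ * b₁ ∈ A)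
    (hdist : [b₁ * b₂, b₂ * b₃, b₃ * b₄, b₄ * b₁].Pairwise (· ≠ ·)) :
    ∃ q : ℚ, r = (q : ℂ) := by
  subst hA
  obtain ⟨i, -, -, hi⟩ := m1
  obtain ⟨j, -, -, hj⟩ := m2
  obtain ⟨k, -, -, hk⟩ := m3
  obtain ⟨l, -, -, hl⟩ := m4
  simp only [List.pairwise_cons, List.mem_cons, List.not_mem_nil] at hdist
  refine exists_rat_eq_of_add_int_mul_add_int_eq (i := i) (j := j) (k := k) (l := l) ?_ ?_ ?_
  · rintro rfl
    exact hdist.1 _ (Or.inl rfl) (by rw [hi, hj])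
  · rintro rfl
    exact hdist.1 _ (Or.inr (Or.inr (Or.inl rfl))) (by rw [hi, hl])
  · rw [← hi, ← hj, ← hk, ← hl]
    ring

theorem stmt_6 (r : ℂ) (N : ℕ) (hN : 0 < N)
    (A : Set ℂ) (hA : A = {z : ℂ | ∃ i : ℤ, 0 ≤ i ∧ i ≤ (N : ℤ) ∧ z = r + (i : ℂ)})
    (b₁ b₂ b₃ b₄ : ℂ) (h1 : b₁ ≠ 0) (h2 : b₂ ≠ 0) (h3 : b₃ ≠ 0) (h4 : b₄ ≠ 0)
    (m1 : b₁ * b₂ ∈ A) (m2 : b₂ * b₃ ∈ A) (m3 : b₃ * b₄ ∈ A) (m4 : b₄ * b₁ ∈ A)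
    (hdist : [b₁ * b₂, b₂ * b₃, b₃ * b₄, b₄ * b₁].Pairwise (· ≠ ·)) :
    ∃ q : ℚ, r = (q : ℂ) :=
  stmt_6_general r N A hA b₁ b₂ b₃ b₄ m1 m2 m3 m4 hdist
end

section
/- Let B be a finite set of nonzero complex numbers and A ⊆ B.B a set of nonzero rational numbers such that the bipartite incidence structure pairing representations is realized by a simple bipartite graph G on vertex set B (edges {b,b'} with b*b' ∈ A, one edge per element of A). Then there exists a set B' of rational numbers with |B'| ≤ |B| such that A ⊆ B'.B'. -/
/-!
Fix a root `r` in each connected component and, for each vertex `v`, a walk from `r` to `v`.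
Whenever the edge products of a nonzero function `f` are rational, propagating along this walk
gives `f v = q_v * f r ^ (±1)`, with the sign given by the parity of the walk. Bipartiteness makes
the two signs at the ends of an edge opposite, so `f u * f v = q_u * q_v` and the rationals `q_v`
form the required set.
-/

namespace SimpleGraph

variable {V K k : Type*} [CommGroupWithZero K] [CommGroupWithZero k] {G : SimpleGraph V}

theorem Walk.exists_eq_mul_zpow_neg_one_pow_length (φ : k →*₀ K) (f : V → K)
    (hf : ∀ v, f v ≠ 0) (hadj : ∀ u v, G.Adj u v → ∃ c, f u * f v = φ c) {u v : V}
    (p : G.Walk u v) : ∃ c, f v = φ c * f u ^ ((-1 : ℤ) ^ p.length) := by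
  induction p with
  | nil => exact ⟨1, by simp⟩
  | @cons u x v h p ih =>
    obtain ⟨c, hc⟩ := ih
    obtain ⟨d, hd⟩ := hadj u x h
    have hx : f x = φ d / f u := eq_div_of_mul_eq (hf u) (by rw [mul_comm, hd])
    refine ⟨c * d ^ ((-1 : ℤ) ^ p.length), ?_⟩
    rw [hc, hx, Walk.length_cons, pow_succ, mul_neg_one, zpow_neg, map_mul, map_zpow₀,
      div_zpow, mul_assoc, div_eq_mul_inv]

theorem Colorable.neg_one_pow_length_eq_neg_of_adj (hG : G.Colorable 2) {r u v : V}
    (p : G.Walk r u) (q : G.Walk r v) (h : G.Adj u v) :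
    (-1 : ℤ) ^ q.length = -(-1) ^ p.length := by
  have hloop := two_colorable_iff_forall_loop_even.1 hG r ((p.concat h).append q.reverse)
  rw [Walk.length_append, Walk.length_concat, Walk.length_reverse] at hloop
  rcases Nat.even_or_odd q.length with hq | hq
  · have hp : Odd p.length := by grind
    rw [hp.neg_one_pow, hq.neg_one_pow, neg_neg]
  · have hp : Even p.length := by grind
    rw [hp.neg_one_pow, hq.neg_one_pow]

theorem Colorable.exists_forall_adj_mul_eq_map_mul (hG : G.Colorable 2) (φ : k →*₀ K)
    (f : V → K) (hf : ∀ v, f v ≠ 0) (hadj : ∀ u v, G.Adj u v → ∃ c, f u * f v = φ c) :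
    ∃ g : V → k, ∀ u v, G.Adj u v → f u * f v = φ (g u * g v) := by
  let root : V → V := fun v ↦ (G.connectedComponentMk v).out
  have walk (v : V) : G.Walk (root v) v :=
    (ConnectedComponent.exact (G.connectedComponentMk v).out_eq).some
  choose g hg using fun v ↦ (walk v).exists_eq_mul_zpow_neg_one_pow_length φ f hf hadj
  refine ⟨g, fun u v huv ↦ ?_⟩
  have hroot : root u = root v := congrArg Quot.out (ConnectedComponent.sound huv.reachable)
  have hsign := hG.neg_one_pow_length_eq_neg_of_adj ((walk u).copy hroot rfl) (walk v) huv
  rw [Walk.length_copy] at hsign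
  rw [hg u, hg v]
  generalize (-1 : ℤ) ^ (walk u).length = e at hsign ⊢
  rw [hsign, hroot, mul_mul_mul_comm, ← zpow_add₀ (hf _), add_neg_cancel, zpow_zero, mul_one,
    map_mul]

end SimpleGraph

theorem stmt_9 (B : Finset ℂ) (hB : (0 : ℂ) ∉ B) (A : Set ℂ)
    (hA : ∀ a ∈ A, a ≠ 0 ∧ ∃ q : ℚ, a = (q : ℂ))
    (G : SimpleGraph {x // x ∈ B}) (hbip : G.Colorable 2)
    (hedge : ∀ u v, G.Adj u v → (u : ℂ) * (v : ℂ) ∈ A)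
    (hcover : ∀ a ∈ A, ∃ u v, G.Adj u v ∧ (u : ℂ) * (v : ℂ) = a) :
    ∃ B' : Finset ℚ, B'.card ≤ B.card ∧
      ∀ a ∈ A, ∃ b ∈ B', ∃ b' ∈ B', a = ((b * b' : ℚ) : ℂ) := by
  obtain ⟨g, hg⟩ := hbip.exists_forall_adj_mul_eq_map_mul (Rat.castHom ℂ).toMonoidWithZeroHom
    Subtype.val (fun v hv ↦ hB (hv ▸ v.2)) fun u v huv ↦ (hA _ (hedge u v huv)).2
  refine ⟨B.attach.image g, Finset.card_image_le.trans B.card_attach.le, fun a ha ↦ ?_⟩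
  obtain ⟨u, v, huv, rfl⟩ := hcover a ha
  exact ⟨g u, Finset.mem_image_of_mem g (B.mem_attach u), g v,
    Finset.mem_image_of_mem g (B.mem_attach v), hg u v huv⟩
end

section
/- Any simple graph on n vertices with more than n^{3/2} edges contains a cycle of length 4. -/
/-!
Without a 4-cycle two distinct vertices have at most one common neighbour, so counting the
paths `a - v - b` with `a ≠ b` by their ends gives `∑ d_v (d_v - 1) ≤ n (n - 1)`. Combined with
Cauchy–Schwarz, `(2m)² ≤ n ∑ d_v²`, this yields `2 m² ≤ n³`, which contradicts `m > n^{3/2}`.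
-/

open Finset

namespace SimpleGraph

variable {V : Type*} [Fintype V] [DecidableEq V] (G : SimpleGraph V) [DecidableRel G.Adj]

lemma exists_fourCycle_of_one_lt_card_inter_neighborFinset {a b : V} (hab : a ≠ b)
    (h : 1 < #(G.neighborFinset a ∩ G.neighborFinset b)) :
    ∃ v₁ v₂ v₃ v₄ : V,
      v₁ ≠ v₂ ∧ v₁ ≠ v₃ ∧ v₁ ≠ v₄ ∧ v₂ ≠ v₃ ∧ v₂ ≠ v₄ ∧ v₃ ≠ v₄ ∧
      G.Adj v₁ v₂ ∧ G.Adj v₂ v₃ ∧ G.Adj v₃ v₄ ∧ G.Adj v₄ v₁ := by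
  obtain ⟨v, hv, w, hw, hvw⟩ := one_lt_card.mp h
  simp only [mem_inter, mem_neighborFinset] at hv hw
  exact ⟨v, a, w, b, (G.ne_of_adj hv.1).symm, hvw, (G.ne_of_adj hv.2).symm,
    G.ne_of_adj hw.1, hab, (G.ne_of_adj hw.2).symm,
    hv.1.symm, hw.1, hw.2.symm, hv.2⟩

lemma sum_card_offDiag_neighborFinset :
    ∑ v, #(G.neighborFinset v).offDiag =
      ∑ q ∈ (univ : Finset V).offDiag, #(G.neighborFinset q.1 ∩ G.neighborFinset q.2) := by
  convert sum_card_bipartiteAbove_eq_sum_card_bipartiteBelow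
    (s := univ) (t := (univ : Finset V).offDiag) (r := fun v q => G.Adj v q.1 ∧ G.Adj v q.2)
    using 3 with v - q -
  · ext q
    simp only [bipartiteAbove, mem_filter, mem_offDiag, mem_univ, mem_neighborFinset, true_and]
    tauto
  · ext v
    simp [bipartiteBelow, adj_comm]

lemma sum_card_offDiag_neighborFinset_le
    (hG : ∀ a b, a ≠ b → #(G.neighborFinset a ∩ G.neighborFinset b) ≤ 1) :
    ∑ v, #(G.neighborFinset v).offDiag ≤ #(univ : Finset V).offDiag := by
  rw [sum_card_offDiag_neighborFinset, card_eq_sum_ones]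
  exact sum_le_sum fun q hq => hG q.1 q.2 (mem_offDiag.mp hq).2.2

lemma sum_sq_degree_le
    (hG : ∀ a b, a ≠ b → #(G.neighborFinset a ∩ G.neighborFinset b) ≤ 1) :
    ∑ v, G.degree v ^ 2 ≤ Fintype.card V * Fintype.card V - Fintype.card V + 2 * #G.edgeFinset := by
  have h := G.sum_card_offDiag_neighborFinset_le hG
  simp only [offDiag_card, card_neighborFinset_eq_degree, card_univ] at h
  rw [← G.sum_degrees_eq_twice_card_edges]
  calc ∑ v, G.degree v ^ 2 = ∑ v, ((G.degree v * G.degree v - G.degree v) + G.degree v) := by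
        refine sum_congr rfl fun v _ => ?_
        rw [Nat.sub_add_cancel (Nat.le_mul_self _), sq]
    _ ≤ _ := by rw [sum_add_distrib]; omega

lemma two_mul_sq_card_edgeFinset_le
    (hG : ∀ a b, a ≠ b → #(G.neighborFinset a ∩ G.neighborFinset b) ≤ 1) :
    2 * #G.edgeFinset ^ 2 ≤ Fintype.card V ^ 3 := by
  set n := Fintype.card V
  set m := #G.edgeFinset
  have hcs : (2 * m) ^ 2 ≤ n * ∑ v, G.degree v ^ 2 := by
    simpa [G.sum_degrees_eq_twice_card_edges] using
      sq_sum_le_card_mul_sum_sq (s := (univ : Finset V)) (f := fun v => G.degree v)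
  have hm : 2 * m ≤ n * n := by
    calc 2 * m = ∑ v, G.degree v := G.sum_degrees_eq_twice_card_edges.symm
      _ ≤ ∑ _v : V, n := sum_le_sum fun v _ => (G.degree_lt_card_verts v).le
      _ = n * n := by simp [n]
  have hsq := Nat.mul_le_mul_left n (G.sum_sq_degree_le hG)
  have hsub : n * n - n ≤ n * n := Nat.sub_le _ _
  nlinarith

end SimpleGraph

theorem stmt_10 (n : ℕ) (G : SimpleGraph (Fin n)) [DecidableRel G.Adj]
    (h : (n : ℝ) ^ (3 / 2 : ℝ) < G.edgeFinset.card) :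
    ∃ v₁ v₂ v₃ v₄ : Fin n,
      v₁ ≠ v₂ ∧ v₁ ≠ v₃ ∧ v₁ ≠ v₄ ∧ v₂ ≠ v₃ ∧ v₂ ≠ v₄ ∧ v₃ ≠ v₄ ∧
      G.Adj v₁ v₂ ∧ G.Adj v₂ v₃ ∧ G.Adj v₃ v₄ ∧ G.Adj v₄ v₁ := by
  by_contra hC4
  have hG : ∀ a b, a ≠ b → #(G.neighborFinset a ∩ G.neighborFinset b) ≤ 1 := fun a b hab =>
    not_lt.mp fun h1 => hC4 (G.exists_fourCycle_of_one_lt_card_inter_neighborFinset hab h1)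
  have hbound := G.two_mul_sq_card_edgeFinset_le hG
  rw [Fintype.card_fin] at hbound
  have hsq : ((n : ℝ) ^ (3 / 2 : ℝ)) ^ 2 = (n : ℝ) ^ 3 := by
    rw [← Real.rpow_natCast, ← Real.rpow_mul n.cast_nonneg]
    norm_num
  have : (n : ℝ) ^ 3 < (#G.edgeFinset : ℝ) ^ 2 := by
    rw [← hsq]
    exact pow_lt_pow_left₀ h (by positivity) two_ne_zero
  have : n ^ 3 < #G.edgeFinset ^ 2 := by exact_mod_cast this
  omega
end

section
/- Let B be a finite set of nonzero real numbers and suppose B.B contains an arithmetic progression A of length N. Then the set |B| = {|b| : b ∈ B} of absolute values satisfies that |B|.|B| contains an arithmetic progression of length at least N/2 (namely the positive or negative terms of A, whichever are more numerous, up to sign). -/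
/-!
Let `x` be the middle term `r + d * ⌊N/2⌋` of the progression. If `x` and `d` have the same
sign, the terms from `x` onwards all have that sign, and otherwise the terms from `x` backwards
do; either way their absolute values form a progression `|x| + |d| * i` of length at least `N/2`,
and it lies in `|B|.|B|` because `|b * c| = |b| * |c|`.
-/

open scoped Pointwise

section LinearOrderedRing

variable {α : Type*} [Ring α] [LinearOrder α] [IsStrictOrderedRing α]

theorem abs_add_mul_of_mul_nonneg {x d t : α} (hxd : 0 ≤ x * d) (ht : 0 ≤ t) :
    |x + d * t| = |x| + |d| * t := by
  have hsign : 0 ≤ x ∧ 0 ≤ d * t ∨ x ≤ 0 ∧ d * t ≤ 0 := by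
    rcases mul_nonneg_iff.mp hxd with ⟨hx, hd⟩ | ⟨hx, hd⟩
    · exact .inl ⟨hx, mul_nonneg hd ht⟩
    · exact .inr ⟨hx, mul_nonpos_of_nonpos_of_nonneg hd ht⟩
  rw [(abs_add_eq_add_abs_iff _ _).mpr hsign, abs_mul, abs_of_nonneg ht]

theorem abs_progression_tail (r d : α) (m i : ℕ) (h : 0 ≤ (r + d * m) * d) :
    |r + d * ↑(m + i)| = |r + d * m| + |d| * i := by
  rw [← abs_add_mul_of_mul_nonneg h i.cast_nonneg, Nat.cast_add, mul_add, add_assoc]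

theorem abs_progression_head (r d : α) {m i : ℕ} (hi : i ≤ m) (h : (r + d * m) * d ≤ 0) :
    |r + d * ↑(m - i)| = |r + d * m| + |d| * i := by
  rw [← abs_neg d, ← abs_add_mul_of_mul_nonneg (by rwa [mul_neg, neg_nonneg]) i.cast_nonneg,
    Nat.cast_sub hi, mul_sub, neg_mul, ← sub_eq_add_neg, add_sub_assoc]

theorem abs_mem_image_abs_mul_image_abs [DecidableEq α] {B : Finset α} {x : α}
    (hx : x ∈ B * B) : |x| ∈ B.image (fun x => |x|) * B.image (fun x => |x|) := by
  obtain ⟨b, hb, c, hc, rfl⟩ := Finset.mem_mul.mp hx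
  rw [abs_mul]
  exact Finset.mul_mem_mul (Finset.mem_image_of_mem _ hb) (Finset.mem_image_of_mem _ hc)

end LinearOrderedRing

theorem stmt_16_general (B : Finset ℝ) (r d : ℝ) (hd : d ≠ 0) (N : ℕ)
    (hA : ∀ i < N, r + d * (i : ℝ) ∈ B * B) :
    ∃ r' d' : ℝ, d' ≠ 0 ∧ ∃ M : ℕ, N ≤ 2 * M ∧
      ∀ i < M, r' + d' * (i : ℝ) ∈ (B.image (fun x => |x|)) * (B.image (fun x => |x|)) := by
  obtain rfl | hN := N.eq_zero_or_pos
  · exact ⟨0, 1, one_ne_zero, 0, le_rfl, fun i hi => absurd hi i.not_lt_zero⟩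
  set m := N / 2
  refine ⟨|r + d * m|, |d|, abs_ne_zero.mpr hd, ?_⟩
  rcases le_total 0 ((r + d * m) * d) with h | h
  · refine ⟨N - m, by omega, fun i hi => ?_⟩
    rw [← abs_progression_tail r d m i h]
    exact abs_mem_image_abs_mul_image_abs (hA _ (by omega))
  · refine ⟨m + 1, by omega, fun i hi => ?_⟩
    rw [← abs_progression_head r d (Nat.lt_succ_iff.mp hi) h]
    exact abs_mem_image_abs_mul_image_abs (hA _ (by omega))

theorem stmt_16 (B : Finset ℝ) (hB : (0 : ℝ) ∉ B) (r d : ℝ) (hd : d ≠ 0) (N : ℕ)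
    (hA : ∀ i < N, r + d * (i : ℝ) ∈ B * B) :
    ∃ r' d' : ℝ, d' ≠ 0 ∧ ∃ M : ℕ, N ≤ 2 * M ∧
      ∀ i < M, r' + d' * (i : ℝ) ∈ (B.image (fun x => |x|)) * (B.image (fun x => |x|)) :=
  stmt_16_general B r d hd N hA
end
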